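/- arXiv:1702.02919 — 2 statements merged into one kernel-verified Lean document; each statement's English description precedes it below -/
import Mathlib

section
/- Let a, b, c be real with c > a + b and c not a non-positive integer. Then the hypergeometric series F(a,b,c;1) = Σ_{n≥0} (a)_n (b)_n / ((c)_n n!) converges and equals Γ(c)Γ(c-a-b)/(Γ(c-a)Γ(c-b)) (Gauss's summation theorem). -/
/-! Once `c > a + b`, the terms `tₙ` of the series satisfy Raabe's condition
`(n + 1) |tₙ₊₁| ≤ (n - δ) |tₙ|` for large `n`, so the series converges absolutely and
`n tₙ → 0`. Telescoping then gives Gauss's contiguous relation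
`c (c - a - b) F(c) = (c - a) (c - b) F(c + 1)`; iterated `m` times it writes `F(c)` as a ratio
of Pochhammer symbols times `F(c + m)`. As `m → ∞`, `F(c + m) → 1`, while Euler's limit formula
`Γ(s) = lim n^s n! / (s)ₙ₊₁` turns the Pochhammer ratio into `Γ(c) Γ(c-a-b) / (Γ(c-a) Γ(c-b))`. -/

open Real Filter Topology Finset

/-- The Gauss hypergeometric function, defined by its power series. -/
noncomputable def hypF (a b c x : ℝ) : ℝ :=
  ∑' n : ℕ, ((ascPochhammer ℝ n).eval a * (ascPochhammer ℝ n).eval b)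
      / ((ascPochhammer ℝ n).eval c * (n.factorial : ℝ)) * x ^ n

section Pochhammer

variable {S : Type*}

lemma ascPochhammer_eval_eq_prod_range [CommSemiring S] (n : ℕ) (x : S) :
    (ascPochhammer S n).eval x = ∏ j ∈ range n, (x + j) := by
  induction n with
  | zero => simp
  | succ n ih => rw [ascPochhammer_succ_eval, ih, prod_range_succ]

lemma ascPochhammer_succ_eval_left [CommSemiring S] (n : ℕ) (x : S) :
    (ascPochhammer S (n + 1)).eval x = x * (ascPochhammer S n).eval (x + 1) := by
  simp [ascPochhammer_succ_left, Polynomial.eval_comp]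

lemma ascPochhammer_eval_le_eval [Semiring S] [PartialOrder S] [IsStrictOrderedRing S]
    {x y : S} (hx : 0 < x) (hxy : x ≤ y) (n : ℕ) :
    (ascPochhammer S n).eval x ≤ (ascPochhammer S n).eval y := by
  induction n with
  | zero => simp
  | succ n ih =>
    rw [ascPochhammer_succ_eval, ascPochhammer_succ_eval]
    exact mul_le_mul ih (add_le_add_left hxy _) (by positivity)
      (ascPochhammer_pos n y (hx.trans_le hxy)).le

lemma ascPochhammer_eval_ne_zero [CommRing S] [IsDomain S] {x : S} (hx : ∀ k : ℕ, x ≠ -k)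
    (n : ℕ) : (ascPochhammer S n).eval x ≠ 0 := by
  rw [Ne, ascPochhammer_eval_eq_zero_iff]
  rintro ⟨k, -, hk⟩
  exact hx k (by rw [hk, neg_neg])

end Pochhammer

lemma summable_of_le_sub_succ {u w : ℕ → ℝ} (hu : ∀ n, 0 ≤ u n) (hw : ∀ n, 0 ≤ w n)
    (h : ∀ n, u n ≤ w n - w (n + 1)) : Summable u :=
  summable_of_sum_range_le hu fun n => calc
    ∑ i ∈ range n, u i ≤ ∑ i ∈ range n, (w i - w (i + 1)) := sum_le_sum fun i _ => h i
    _ = w 0 - w n := sum_range_sub' w n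
    _ ≤ w 0 := sub_le_self _ (hw n)

lemma hasSum_sub_succ_of_tendsto {G : Type*} [AddCommGroup G] [TopologicalSpace G]
    [IsTopologicalAddGroup G] [T2Space G] {f : ℕ → G} {l : G} (hf : Tendsto f atTop (𝓝 l))
    (hs : Summable fun n => f n - f (n + 1)) : HasSum (fun n => f n - f (n + 1)) (f 0 - l) :=
  hs.hasSum_iff_tendsto_nat.2 (by simpa only [sum_range_sub'] using hf.const_sub (f 0))

/-- Otherwise `|uₙ| ≥ |L| / (2n)` eventually, against the divergence of the harmonic series. -/
lemma eq_zero_of_summable_of_tendsto_natCast_mul {u : ℕ → ℝ} {L : ℝ} (hu : Summable u)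
    (hL : Tendsto (fun n : ℕ => n * u n) atTop (𝓝 L)) : L = 0 := by
  by_contra hL0
  have hpos : 0 < |L| := abs_pos.2 hL0
  have hbig : ∀ᶠ n : ℕ in atTop, |L| / 2 ≤ |n * u n| :=
    hL.abs.eventually (eventually_ge_nhds (by linarith))
  refine not_summable_natCast_inv ((hu.abs.mul_left (2 / |L|)).of_norm_bounded_eventually ?_)
  rw [Nat.cofinite_eq_atTop]
  filter_upwards [hbig, eventually_gt_atTop 0] with n hn hn0
  rw [abs_mul, Nat.abs_cast] at hn
  rw [norm_inv, Real.norm_natCast, inv_le_iff_one_le_mul₀ (Nat.cast_pos.2 hn0)]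
  calc (1 : ℝ) = 2 / |L| * (|L| / 2) := by field_simp
    _ ≤ 2 / |L| * (n * |u n|) := by gcongr
    _ = 2 / |L| * |u n| * n := by ring

lemma summable_and_tendsto_natCast_mul_of_raabe {u : ℕ → ℝ} {δ : ℝ} (hu : ∀ n, 0 ≤ u n)
    (hδ : 0 < δ) (h : ∀ᶠ n : ℕ in atTop, (n + 1) * u (n + 1) + δ * u n ≤ n * u n) :
    Summable u ∧ Tendsto (fun n : ℕ => n * u n) atTop (𝓝 0) := by
  obtain ⟨N, hN⟩ := eventually_atTop.1 h
  set w : ℕ → ℝ := fun n => ((n + N : ℕ) : ℝ) * u (n + N) with hw_def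
  have hw : ∀ n, 0 ≤ w n := fun n => mul_nonneg (Nat.cast_nonneg _) (hu _)
  have hstep : ∀ n, δ * u (n + N) ≤ w n - w (n + 1) := fun n => by
    have := hN (n + N) (Nat.le_add_left N n)
    simp only [hw_def, Nat.add_right_comm n 1 N]
    push_cast at this ⊢
    linarith
  have hsum : Summable u := (summable_nat_add_iff N).1 <| (summable_mul_left_iff hδ.ne').1 <|
    summable_of_le_sub_succ (fun n => mul_nonneg hδ.le (hu _)) hw hstep
  have hanti : Antitone w := antitone_nat_of_succ_le fun n => by
    nlinarith [hstep n, hu (n + N)]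
  have hlim : Tendsto (fun n : ℕ => n * u n) atTop (𝓝 (⨅ n, w n)) :=
    (tendsto_add_atTop_iff_nat N).1 (tendsto_atTop_ciInf hanti ⟨0, Set.forall_mem_range.2 hw⟩)
  refine ⟨hsum, ?_⟩
  rwa [eq_zero_of_summable_of_tendsto_natCast_mul hsum hlim] at hlim

namespace Real

lemma tendsto_GammaSeq_inv (s : ℝ) :
    Tendsto (fun n => (GammaSeq s n)⁻¹) atTop (𝓝 (Gamma s)⁻¹) := by
  rcases eq_or_ne (Gamma s) 0 with h | h
  · obtain ⟨m, rfl⟩ := (Gamma_eq_zero_iff s).1 h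
    rw [h, inv_zero]
    refine tendsto_const_nhds.congr' ?_
    filter_upwards [eventually_ge_atTop m] with n hn
    rw [GammaSeq, prod_eq_zero (mem_range.2 (Nat.lt_succ_of_le hn)) (neg_add_cancel _), div_zero,
      inv_zero]
  · exact (GammaSeq_tendsto_Gamma s).inv₀ h

lemma GammaSeq_mul_GammaSeq_div {s₁ s₂ s₃ s₄ : ℝ} (hs : s₁ + s₂ = s₃ + s₄) {n : ℕ}
    (hn : n ≠ 0) :
    GammaSeq s₁ n * GammaSeq s₂ n / (GammaSeq s₃ n * GammaSeq s₄ n)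
      = (ascPochhammer ℝ (n + 1)).eval s₃ * (ascPochhammer ℝ (n + 1)).eval s₄
        / ((ascPochhammer ℝ (n + 1)).eval s₁ * (ascPochhammer ℝ (n + 1)).eval s₂) := by
  have hn' : (0 : ℝ) < n := Nat.cast_pos.2 (Nat.pos_of_ne_zero hn)
  have hpow : (n : ℝ) ^ s₁ * n ^ s₂ = n ^ s₃ * n ^ s₄ := by
    rw [← rpow_add hn', ← rpow_add hn', hs]
  have hX : (n : ℝ) ^ s₃ * n ^ s₄ * n.factorial * n.factorial ≠ 0 := by positivity
  simp only [GammaSeq, ← ascPochhammer_eval_eq_prod_range]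
  rw [div_mul_div_comm, div_mul_div_comm, div_div_div_eq,
    show (n : ℝ) ^ s₁ * n.factorial * (n ^ s₂ * n.factorial)
      = n ^ s₃ * n ^ s₄ * n.factorial * n.factorial by rw [← hpow]; ring,
    show (n : ℝ) ^ s₃ * n.factorial * (n ^ s₄ * n.factorial)
      = n ^ s₃ * n ^ s₄ * n.factorial * n.factorial by ring,
    mul_comm _ (_ * _), mul_div_mul_right _ _ hX]

lemma tendsto_ascPochhammer_ratio {s₁ s₂ s₃ s₄ : ℝ} (hs : s₁ + s₂ = s₃ + s₄) :
    Tendsto (fun n => (ascPochhammer ℝ n).eval s₃ * (ascPochhammer ℝ n).eval s₄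
        / ((ascPochhammer ℝ n).eval s₁ * (ascPochhammer ℝ n).eval s₂)) atTop
      (𝓝 (Gamma s₁ * Gamma s₂ / (Gamma s₃ * Gamma s₄))) := by
  have hlim := ((GammaSeq_tendsto_Gamma s₁).mul (GammaSeq_tendsto_Gamma s₂)).mul
    ((tendsto_GammaSeq_inv s₃).mul (tendsto_GammaSeq_inv s₄))
  rw [← mul_inv, ← div_eq_mul_inv] at hlim
  rw [← tendsto_add_atTop_iff_nat 1]
  refine hlim.congr' ?_
  filter_upwards [eventually_ne_atTop 0] with n hn
  rw [← mul_inv, ← div_eq_mul_inv, GammaSeq_mul_GammaSeq_div hs hn]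

end Real

noncomputable def hypTerm (a b c : ℝ) (n : ℕ) : ℝ :=
  ((ascPochhammer ℝ n).eval a * (ascPochhammer ℝ n).eval b)
      / ((ascPochhammer ℝ n).eval c * (n.factorial : ℝ))

lemma hypF_one (a b c : ℝ) : hypF a b c 1 = ∑' n, hypTerm a b c n := by
  simp [hypF, hypTerm]

@[simp] lemma hypTerm_zero (a b c : ℝ) : hypTerm a b c 0 = 1 := by
  simp [hypTerm]

lemma hypTerm_eq_div (a b c : ℝ) (n : ℕ) :
    hypTerm a b c n
      = (ascPochhammer ℝ n).eval a * (ascPochhammer ℝ n).eval b / n.factorial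
        / (ascPochhammer ℝ n).eval c := by
  rw [hypTerm, div_div, mul_comm ((ascPochhammer ℝ n).eval c)]

lemma hypTerm_succ (a b : ℝ) {c : ℝ} {n : ℕ} (hcn : c + n ≠ 0) :
    (c + n) * (n + 1) * hypTerm a b c (n + 1) = (a + n) * (b + n) * hypTerm a b c n := by
  simp only [hypTerm, ascPochhammer_succ_eval, Nat.factorial_succ, Nat.cast_mul, Nat.cast_succ]
  rcases eq_or_ne ((ascPochhammer ℝ n).eval c) 0 with h0 | h0
  · simp [h0]
  · field_simp

lemma add_mul_hypTerm_add_one (a b : ℝ) {c : ℝ} (hc : ∀ k : ℕ, c ≠ -k) (n : ℕ) :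
    (c + n) * hypTerm a b (c + 1) n = c * hypTerm a b c n := by
  have hc₁ : ∀ k : ℕ, c + 1 ≠ -k := fun k h => hc (k + 1) (by push_cast; linarith)
  have hshift :
      c * (ascPochhammer ℝ n).eval (c + 1) = (ascPochhammer ℝ n).eval c * (c + n) := by
    rw [← ascPochhammer_succ_eval_left, ascPochhammer_succ_eval]
  have hp := ascPochhammer_eval_ne_zero hc n
  have hp₁ := ascPochhammer_eval_ne_zero hc₁ n
  simp only [hypTerm]
  field_simp
  linear_combination (-(ascPochhammer ℝ n).eval a * (ascPochhammer ℝ n).eval b) * hshift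

lemma abs_hypTerm_succ_le (a b : ℝ) {x y : ℝ} (hx : 0 < x) (hxy : x ≤ y) (n : ℕ) :
    |hypTerm a b y (n + 1)| ≤ x / y * |hypTerm a b x (n + 1)| := by
  have hy : 0 < y := hx.trans_le hxy
  have hpx := ascPochhammer_pos n (x + 1) (by linarith)
  have hmono :=
    ascPochhammer_eval_le_eval (by linarith : 0 < x + 1) (by linarith : x + 1 ≤ y + 1) n
  rw [hypTerm_eq_div, hypTerm_eq_div, ascPochhammer_succ_eval_left n x,
    ascPochhammer_succ_eval_left n y]
  generalize (ascPochhammer ℝ (n + 1)).eval a * (ascPochhammer ℝ (n + 1)).eval b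
    / ((n + 1).factorial : ℝ) = M
  rw [abs_div, abs_div, abs_of_pos (by positivity : 0 < x * (ascPochhammer ℝ n).eval (x + 1)),
    abs_of_pos (mul_pos hy (hpx.trans_le hmono))]
  calc |M| / (y * (ascPochhammer ℝ n).eval (y + 1))
      ≤ |M| / (y * (ascPochhammer ℝ n).eval (x + 1)) := by gcongr
    _ = x / y * (|M| / (x * (ascPochhammer ℝ n).eval (x + 1))) := by field_simp

lemma eventually_raabe_hypTerm (a b : ℝ) {c : ℝ} (h : a + b < c) :
    ∀ᶠ n : ℕ in atTop, (n + 1) * |hypTerm a b c (n + 1)| + (c - a - b) / 2 * |hypTerm a b c n|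
      ≤ n * |hypTerm a b c n| := by
  have hr : 0 < c - a - b := by linarith
  have hn := tendsto_natCast_atTop_atTop (R := ℝ)
  filter_upwards [hn.eventually_ge_atTop (-a), hn.eventually_ge_atTop (-b),
    hn.eventually_gt_atTop (-c), hn.eventually_ge_atTop (2 * (a * b) / (c - a - b) + c)]
    with n ha hb hc hab
  have hcn : 0 < c + n := by linarith
  have hrec : (c + n) * (n + 1) * |hypTerm a b c (n + 1)|
      = (a + n) * (b + n) * |hypTerm a b c n| := by
    have := congrArg abs (hypTerm_succ a b hcn.ne')
    rwa [abs_mul, abs_mul, abs_mul, abs_mul, abs_of_pos hcn,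
      abs_of_nonneg (by linarith : 0 ≤ a + n), abs_of_nonneg (by linarith : 0 ≤ b + n),
      abs_of_pos (by positivity : (0 : ℝ) < n + 1)] at this
  have hquad : (a + n) * (b + n) + (c - a - b) / 2 * (c + n) ≤ n * (c + n) := by
    have := (div_le_iff₀ hr).1 (le_sub_iff_add_le.2 hab)
    nlinarith
  refine le_of_mul_le_mul_left ?_ hcn
  nlinarith [mul_le_mul_of_nonneg_right hquad (abs_nonneg (hypTerm a b c n))]

lemma summable_abs_hypTerm (a b : ℝ) {c : ℝ} (h : a + b < c) :
    Summable fun n => |hypTerm a b c n| :=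
  (summable_and_tendsto_natCast_mul_of_raabe (fun _ => abs_nonneg _) (by linarith)
    (eventually_raabe_hypTerm a b h)).1

lemma tendsto_natCast_mul_abs_hypTerm (a b : ℝ) {c : ℝ} (h : a + b < c) :
    Tendsto (fun n : ℕ => n * |hypTerm a b c n|) atTop (𝓝 0) :=
  (summable_and_tendsto_natCast_mul_of_raabe (fun _ => abs_nonneg _) (by linarith)
    (eventually_raabe_hypTerm a b h)).2

lemma hypF_one_contiguous (a b : ℝ) {c : ℝ} (h : a + b < c) (hc : ∀ k : ℕ, c ≠ -k) :
    c * (c - a - b) * hypF a b c 1 = (c - a) * (c - b) * hypF a b (c + 1) 1 := by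
  have hsum := summable_abs_hypTerm a b h
  have hsum₁ := summable_abs_hypTerm a b (c := c + 1) (by linarith)
  set U : ℕ → ℝ := fun n => c * (n * hypTerm a b c n) with hU
  have hterm : ∀ n, c * (c - a - b) * hypTerm a b c n - (c - a) * (c - b) * hypTerm a b (c + 1) n
      = U n - U (n + 1) := fun n => by
    have hcn : c + n ≠ 0 := fun h0 => hc n (by linarith)
    apply mul_left_cancel₀ hcn
    simp only [hU]
    push_cast
    linear_combination
      -(c - a) * (c - b) * add_mul_hypTerm_add_one a b hc n + c * hypTerm_succ a b hcn
  have hU0 : Tendsto U atTop (𝓝 0) := by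
    simpa using
      (squeeze_zero_norm (fun n => by simp) (tendsto_natCast_mul_abs_hypTerm a b h)).const_mul c
  have hdiff : HasSum (fun n => U n - U (n + 1)) 0 := by
    simpa [hU] using hasSum_sub_succ_of_tendsto hU0
      (((hsum.of_abs.mul_left _).sub (hsum₁.of_abs.mul_left _)).congr hterm)
  rw [hypF_one, hypF_one, ← tsum_mul_left, ← tsum_mul_left, ← sub_eq_zero,
    ← (hsum.of_abs.mul_left _).tsum_sub (hsum₁.of_abs.mul_left _), tsum_congr hterm,
    hdiff.tsum_eq]

lemma hypF_one_mul_ascPochhammer (a b : ℝ) {c : ℝ} (h : a + b < c) (hc : ∀ k : ℕ, c ≠ -k)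
    (m : ℕ) :
    (ascPochhammer ℝ m).eval c * (ascPochhammer ℝ m).eval (c - a - b) * hypF a b c 1
      = (ascPochhammer ℝ m).eval (c - a) * (ascPochhammer ℝ m).eval (c - b)
        * hypF a b (c + m) 1 := by
  induction m with
  | zero => simp
  | succ m ih =>
    have hcm : ∀ k : ℕ, c + m ≠ -k := fun k hk => hc (k + m) (by push_cast; linarith)
    have hstep := hypF_one_contiguous a b (c := c + m) (by linarith [m.cast_nonneg (α := ℝ)]) hcm
    simp only [ascPochhammer_succ_eval, Nat.cast_succ, ← add_assoc]
    linear_combination (c + m) * (c - a - b + m) * ih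
      + (ascPochhammer ℝ m).eval (c - a) * (ascPochhammer ℝ m).eval (c - b) * hstep

lemma tendsto_hypF_one_atTop (a b : ℝ) : Tendsto (fun x => hypF a b x 1) atTop (𝓝 1) := by
  set x₀ := max 1 (a + b + 1)
  have hx₀ : 0 < x₀ := lt_max_of_lt_left one_pos
  have hsum : Summable fun n => |hypTerm a b x₀ (n + 1)| :=
    (summable_nat_add_iff 1).2 (summable_abs_hypTerm a b (by simp [x₀]))
  have hbound :
      ∀ x ≥ x₀, |hypF a b x 1 - 1| ≤ x₀ / x * ∑' n, |hypTerm a b x₀ (n + 1)| := by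
    intro x hx
    have hle := abs_hypTerm_succ_le a b hx₀ hx
    have hsum_x : Summable fun n => |hypTerm a b x (n + 1)| :=
      (hsum.mul_left _).of_nonneg_of_le (fun _ => abs_nonneg _) hle
    rw [hypF_one, ((summable_nat_add_iff 1).1 hsum_x.of_abs).tsum_eq_zero_add, hypTerm_zero,
      add_sub_cancel_left, ← tsum_mul_left]
    calc |∑' n, hypTerm a b x (n + 1)| ≤ ∑' n, |hypTerm a b x (n + 1)| := by
          simpa using norm_tsum_le_tsum_norm (f := fun n => hypTerm a b x (n + 1)) hsum_x
      _ ≤ _ := hsum_x.tsum_le_tsum hle (hsum.mul_left _)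
  have hlim : Tendsto (fun x => x₀ / x * ∑' n, |hypTerm a b x₀ (n + 1)|) atTop (𝓝 0) := by
    simpa using ((tendsto_const_nhds (x := x₀)).div_atTop tendsto_id).mul_const
      (∑' n, |hypTerm a b x₀ (n + 1)|)
  exact tendsto_iff_norm_sub_tendsto_zero.2 <|
    squeeze_zero' (.of_forall fun _ => norm_nonneg _) ((eventually_ge_atTop x₀).mono hbound) hlim

theorem stmt_6_general (a b c : ℝ) (h : c > a + b)
    (hc : ∀ n : ℕ, c ≠ -(n : ℝ)) :
    Summable (fun n : ℕ => ((ascPochhammer ℝ n).eval a * (ascPochhammer ℝ n).eval b)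
        / ((ascPochhammer ℝ n).eval c * (n.factorial : ℝ))) ∧
    hypF a b c 1
      = Real.Gamma c * Real.Gamma (c - a - b) / (Real.Gamma (c - a) * Real.Gamma (c - b)) := by
  refine ⟨(summable_abs_hypTerm a b h).of_abs, ?_⟩
  have hden :
      ∀ m : ℕ, (ascPochhammer ℝ m).eval c * (ascPochhammer ℝ m).eval (c - a - b) ≠ 0 :=
    fun m => mul_ne_zero (ascPochhammer_eval_ne_zero hc m)
      (ascPochhammer_pos m _ (by linarith)).ne'
  have hlim := (tendsto_ascPochhammer_ratio (s₁ := c) (s₂ := c - a - b) (s₃ := c - a)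
    (s₄ := c - b) (by ring)).mul ((tendsto_hypF_one_atTop a b).comp
      (tendsto_atTop_add_const_left _ c tendsto_natCast_atTop_atTop))
  rw [mul_one] at hlim
  refine tendsto_nhds_unique (tendsto_const_nhds.congr fun m => ?_) hlim
  rw [Function.comp_apply, div_mul_eq_mul_div, eq_div_iff (hden m), mul_comm,
    hypF_one_mul_ascPochhammer a b h hc m]

theorem stmt_6 (a b c : ℝ) (h : c > a + b)
    (hc : ∀ n : ℕ, c ≠ -(n : ℝ)) (hca : ∀ n : ℕ, c - a ≠ -(n : ℝ))
    (hcb : ∀ n : ℕ, c - b ≠ -(n : ℝ)) :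
    Summable (fun n : ℕ => ((ascPochhammer ℝ n).eval a * (ascPochhammer ℝ n).eval b)
        / ((ascPochhammer ℝ n).eval c * (n.factorial : ℝ))) ∧
    hypF a b c 1
      = Real.Gamma c * Real.Gamma (c - a - b) / (Real.Gamma (c - a) * Real.Gamma (c - b)) :=
  stmt_6_general a b c h hc
end

section
/- Let a, b, c be real with c not a non-positive integer. For all x ∈ (0,1), F(a, b, c; x) = (1-x)^{c-a-b} F(c-a, c-b, c; x) (Euler's transformation). -/
open Real

/-!
Expanding `(1 - x) ^ (c - a - b) = ∑ (a + b - c)ₗ xˡ / l!` and taking the Cauchy product with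
`F(c - a, c - b, c; x)`, Euler's transformation becomes, coefficientwise, the terminating
Pfaff–Saalschütz identity
  `∑_{k + l = n} (c - a)ₖ (c - b)ₖ (c + k)ₗ (a + b - c)ₗ / (k! l!) = (a)ₙ (b)ₙ / n!`.
This is proved by induction on `n` with a Wilf–Zeilberger pair: on `k + l = n` the summand
satisfies `F(k, l + 1) = (a + n)(b + n)/(n + 1) F(k, l) + G(k + 1, l) - G(k, l + 1)`, and the
`G`-terms telescope along the antidiagonal. All three series converge absolutely for `|x| < 1`
because `c` is not a non-positive integer.
-/

open Finset Polynomial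
open scoped Nat

theorem Finset.Nat.sum_antidiagonal_succ_sub {M : Type*} [AddCommGroup M] (f : ℕ × ℕ → M)
    (n : ℕ) :
    ∑ p ∈ antidiagonal n, (f (p.1 + 1, p.2) - f (p.1, p.2 + 1)) =
      f (n + 1, 0) - f (0, n + 1) := by
  rw [sum_sub_distrib, sub_eq_sub_iff_add_eq_add, add_comm, ← Nat.sum_antidiagonal_succ,
    Nat.sum_antidiagonal_succ']

section Pochhammer

variable {S : Type*} [CommSemiring S]

theorem ascPochhammer_add_eval (x : S) (k l : ℕ) :
    (ascPochhammer S (k + l)).eval x =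
      (ascPochhammer S k).eval x * (ascPochhammer S l).eval (x + k) := by
  rw [← ascPochhammer_mul, eval_mul, eval_comp]
  simp

theorem ascPochhammer_eval_add_one_mul (x : S) (l : ℕ) :
    (ascPochhammer S l).eval (x + 1) * x = (ascPochhammer S l).eval x * (x + l) := by
  rw [← ascPochhammer_succ_eval, ascPochhammer_succ_left]
  simp [eval_comp, mul_comm]

end Pochhammer

section Saalschutz

variable {K : Type*} [Field K] [CharZero K]

noncomputable def saalschutzTerm (a b c : K) (k l : ℕ) : K :=
  (ascPochhammer K k).eval (c - a) * (ascPochhammer K k).eval (c - b) *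
    ((ascPochhammer K l).eval (c + k) * (ascPochhammer K l).eval (a + b - c)) / (k ! * l !)

/-- The Wilf–Zeilberger certificate of `saalschutzTerm`. -/
noncomputable def saalschutzCert (a b c : K) (k l : ℕ) : K :=
  -(k * (c + k - 1)) / ((k + l) * (c + k + l - 1)) * saalschutzTerm a b c k l

theorem saalschutzTerm_succ_right (a b c : K) (k l : ℕ) :
    saalschutzTerm a b c k (l + 1) =
      (c + k + l) * (a + b - c + l) / (l + 1) * saalschutzTerm a b c k l := by
  have := Nat.cast_ne_zero (R := K) |>.mpr (Nat.factorial_ne_zero k)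
  have := Nat.cast_ne_zero (R := K) |>.mpr (Nat.factorial_ne_zero l)
  have := Nat.cast_add_one_ne_zero (R := K) l
  rw [saalschutzTerm, saalschutzTerm, ascPochhammer_succ_eval, ascPochhammer_succ_eval,
    Nat.factorial_succ]
  push_cast
  field_simp

theorem saalschutzTerm_succ_left (a b c : K) (k l : ℕ) (hck : c + k ≠ 0) :
    saalschutzTerm a b c (k + 1) l =
      (c - a + k) * (c - b + k) * (c + k + l) / ((k + 1) * (c + k)) *
        saalschutzTerm a b c k l := by
  have := Nat.cast_ne_zero (R := K) |>.mpr (Nat.factorial_ne_zero k)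
  have := Nat.cast_ne_zero (R := K) |>.mpr (Nat.factorial_ne_zero l)
  have := Nat.cast_add_one_ne_zero (R := K) k
  rw [saalschutzTerm, saalschutzTerm, ascPochhammer_succ_eval, ascPochhammer_succ_eval,
    Nat.factorial_succ, Nat.cast_succ, ← add_assoc,
    (eq_div_iff_mul_eq hck).mpr (ascPochhammer_eval_add_one_mul (c + k) l)]
  push_cast
  field_simp

theorem saalschutzTerm_succ_right_eq_mul_add_sub (a b c : K) (k l : ℕ) (hck : c + k ≠ 0)
    (hckl : c + (k + l) ≠ 0) :
    saalschutzTerm a b c k (l + 1) =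
      (a + (k + l)) * (b + (k + l)) / (k + l + 1) * saalschutzTerm a b c k l +
        (saalschutzCert a b c (k + 1) l - saalschutzCert a b c k (l + 1)) := by
  have := Nat.cast_add_one_ne_zero (R := K) k
  have := Nat.cast_add_one_ne_zero (R := K) l
  have := Nat.cast_add_one_ne_zero (R := K) (k + l)
  push_cast at this
  rw [saalschutzCert, saalschutzCert, saalschutzTerm_succ_left a b c k l hck,
    saalschutzTerm_succ_right]
  generalize saalschutzTerm a b c k l = T
  push_cast
  rw [show (k : K) + 1 + l = k + l + 1 by ring, show (k : K) + (l + 1) = k + l + 1 by ring,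
    show c + (k + 1) + l - 1 = c + (k + l) by ring, show c + k + (l + 1) - 1 = c + (k + l) by ring]
  field_simp
  ring

theorem saalschutzCert_zero_left (a b c : K) (l : ℕ) : saalschutzCert a b c 0 l = 0 := by
  simp [saalschutzCert]

theorem saalschutzCert_zero_right (a b c : K) (k : ℕ) (hck : c + k ≠ 0) :
    saalschutzCert a b c (k + 1) 0 = -saalschutzTerm a b c (k + 1) 0 := by
  have := Nat.cast_add_one_ne_zero (R := K) k
  rw [saalschutzCert]
  push_cast
  rw [add_zero, add_zero, show c + (k + 1) - 1 = c + k by ring, neg_div,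
    div_self (mul_ne_zero this hck), neg_one_mul]

theorem sum_saalschutzTerm (a b c : K) (hc : ∀ n : ℕ, c + n ≠ 0) (n : ℕ) :
    ∑ p ∈ antidiagonal n, saalschutzTerm a b c p.1 p.2 =
      (ascPochhammer K n).eval a * (ascPochhammer K n).eval b / n ! := by
  induction n with
  | zero => simp [saalschutzTerm]
  | succ n ih =>
    have hstep : ∀ p ∈ antidiagonal n, saalschutzTerm a b c p.1 (p.2 + 1) =
        (a + n) * (b + n) / (n + 1) * saalschutzTerm a b c p.1 p.2 +
          (saalschutzCert a b c (p.1 + 1) p.2 - saalschutzCert a b c p.1 (p.2 + 1)) := by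
      rintro ⟨k, l⟩ hkl
      obtain rfl : k + l = n := mem_antidiagonal.mp hkl
      exact_mod_cast saalschutzTerm_succ_right_eq_mul_add_sub a b c k l (hc k)
        (by exact_mod_cast hc (k + l))
    rw [Nat.sum_antidiagonal_succ', sum_congr rfl hstep, sum_add_distrib, ← mul_sum, ih,
      Nat.sum_antidiagonal_succ_sub (fun p => saalschutzCert a b c p.1 p.2),
      saalschutzCert_zero_left, saalschutzCert_zero_right a b c n (hc n),
      ascPochhammer_succ_eval, ascPochhammer_succ_eval, Nat.factorial_succ]
    have := Nat.cast_ne_zero (R := K) |>.mpr (Nat.factorial_ne_zero n)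
    have := Nat.cast_add_one_ne_zero (R := K) n
    push_cast
    field_simp
    ring

end Saalschutz

section Radius

variable {𝕂 : Type*} [RCLike 𝕂] {𝔸 : Type*} [NormedDivisionRing 𝔸] [NormedAlgebra 𝕂 𝔸]

theorem one_le_radius_ordinaryHypergeometricSeries (a b : 𝕂) {c : 𝕂}
    (hc : ∀ n : ℕ, (n : 𝕂) ≠ -c) : 1 ≤ (ordinaryHypergeometricSeries 𝔸 a b c).radius := by
  by_cases ha : ∃ k : ℕ, a = -k
  · obtain ⟨k, rfl⟩ := ha
    simp [ordinaryHypergeometric_radius_top_of_neg_nat₁]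
  by_cases hb : ∃ k : ℕ, b = -k
  · obtain ⟨k, rfl⟩ := hb
    simp [ordinaryHypergeometric_radius_top_of_neg_nat₂]
  push Not at ha hb
  rw [ordinaryHypergeometricSeries_radius_eq_one _ a b c fun k =>
    ⟨fun h => ha k (neg_eq_iff_eq_neg.mp h.symm), fun h => hb k (neg_eq_iff_eq_neg.mp h.symm),
      hc k⟩]

end Radius

section Series

variable {𝕂 : Type*} [RCLike 𝕂]

theorem ordinaryHypergeometric_eq_tsum_mul (a b c x : 𝕂) :
    ₂F₁ a b c x = ∑' n, ordinaryHypergeometricCoefficient a b c n * x ^ n := by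
  simp [ordinaryHypergeometric_eq_tsum]

theorem summable_norm_ordinaryHypergeometricCoefficient_mul_pow (a b : 𝕂) {c x : 𝕂}
    (hc : ∀ n : ℕ, (n : 𝕂) ≠ -c) (hx : ‖x‖ < 1) :
    Summable fun n => ‖ordinaryHypergeometricCoefficient a b c n * x ^ n‖ := by
  have hx' : x ∈ Metric.eball (0 : 𝕂) (ordinaryHypergeometricSeries 𝕂 a b c).radius := by
    refine mem_eball_zero_iff.mpr
      (lt_of_lt_of_le ?_ (one_le_radius_ordinaryHypergeometricSeries a b hc))
    rwa [enorm_eq_nnnorm, ENNReal.coe_lt_one_iff, ← NNReal.coe_lt_one, coe_nnnorm]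
  refine ((ordinaryHypergeometricSeries 𝕂 a b c).summable_norm_apply hx').congr fun n => ?_
  rw [ordinaryHypergeometricSeries_apply_eq, smul_eq_mul]

end Series

theorem tsum_mul_pow_mul_tsum_mul_pow {R : Type*} [NormedCommRing R] [CompleteSpace R]
    {f g : ℕ → R} {x : R} (hf : Summable fun n => ‖f n * x ^ n‖)
    (hg : Summable fun n => ‖g n * x ^ n‖) :
    (∑' n, f n * x ^ n) * ∑' n, g n * x ^ n =
      ∑' n, (∑ p ∈ antidiagonal n, f p.1 * g p.2) * x ^ n := by
  rw [tsum_mul_tsum_eq_tsum_sum_antidiagonal_of_summable_norm hf hg]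
  refine tsum_congr fun n => ?_
  rw [sum_mul]
  refine sum_congr rfl fun p hp => ?_
  rw [← mem_antidiagonal.mp hp, pow_add]
  ring

theorem Real.one_sub_rpow_eq_ordinaryHypergeometric (e : ℝ) {x : ℝ} (hx : |x| < 1) :
    (1 - x) ^ e = ₂F₁ (-e) 1 1 x := by
  have hsum := (Real.one_add_rpow_hasFPowerSeriesOnBall_zero (a := e)).hasSum (y := -x)
    (mem_eball_zero_iff.mpr (by
      rwa [enorm_eq_nnnorm, ENNReal.coe_lt_one_iff, ← NNReal.coe_lt_one, coe_nnnorm, norm_neg]))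
  rw [binomialSeries_eq_ordinaryHypergeometricSeries (b := 1) (by norm_cast; simp)] at hsum
  simp only [FormalMultilinearSeries.compContinuousLinearMap_apply, Function.comp_def,
    neg_apply, ContinuousLinearMap.id_apply, neg_neg, zero_sub, ← sub_eq_add_neg] at hsum
  exact hsum.tsum_eq.symm

section Coefficients

variable {K : Type*} [Field K] [CharZero K]

theorem ordinaryHypergeometricCoefficient_mul_binomial (a b : K) {c : K}
    (hc : ∀ n : ℕ, (n : K) ≠ -c) (k l : ℕ) :
    ordinaryHypergeometricCoefficient (c - a) (c - b) c k *
        ordinaryHypergeometricCoefficient (a + b - c) 1 1 l =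
      saalschutzTerm a b c k l / (ascPochhammer K (k + l)).eval c := by
  have hne : (ascPochhammer K (k + l)).eval c ≠ 0 := fun h => by
    obtain ⟨m, -, hm⟩ := (ascPochhammer_eval_eq_zero_iff _ _).mp h
    exact hc m hm
  rw [ascPochhammer_add_eval] at hne ⊢
  obtain ⟨h1, h2⟩ := mul_ne_zero_iff.mp hne
  have := Nat.cast_ne_zero (R := K) |>.mpr (Nat.factorial_ne_zero k)
  have := Nat.cast_ne_zero (R := K) |>.mpr (Nat.factorial_ne_zero l)
  rw [ordinaryHypergeometricCoefficient, ordinaryHypergeometricCoefficient, saalschutzTerm,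
    ascPochhammer_eval_one]
  field_simp

theorem sum_antidiagonal_ordinaryHypergeometricCoefficient_mul (a b : K) {c : K}
    (hc : ∀ n : ℕ, (n : K) ≠ -c) (n : ℕ) :
    ∑ p ∈ antidiagonal n, ordinaryHypergeometricCoefficient (c - a) (c - b) c p.1 *
        ordinaryHypergeometricCoefficient (a + b - c) 1 1 p.2 =
      ordinaryHypergeometricCoefficient a b c n := by
  rw [sum_congr rfl fun p hp => by
      rw [ordinaryHypergeometricCoefficient_mul_binomial a b hc, mem_antidiagonal.mp hp],
    ← sum_div, sum_saalschutzTerm a b c (fun m h => hc m (eq_neg_of_add_eq_zero_right h)),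
    ordinaryHypergeometricCoefficient]
  ring

end Coefficients

theorem ordinaryHypergeometric_eq_one_sub_rpow_mul (a b : ℝ) {c x : ℝ}
    (hc : ∀ n : ℕ, (n : ℝ) ≠ -c) (hx : |x| < 1) :
    ₂F₁ a b c x = (1 - x) ^ (c - a - b) * ₂F₁ (c - a) (c - b) c x := by
  have h1 : ∀ n : ℕ, (n : ℝ) ≠ -1 := fun n h => by linarith [n.cast_nonneg (α := ℝ)]
  have hx' : ‖x‖ < 1 := by rwa [Real.norm_eq_abs]
  have hsum := summable_norm_ordinaryHypergeometricCoefficient_mul_pow (c - a) (c - b) hc hx'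
  have hsum_binomial :=
    summable_norm_ordinaryHypergeometricCoefficient_mul_pow (a + b - c) 1 h1 hx'
  rw [one_sub_rpow_eq_ordinaryHypergeometric _ hx, show -(c - a - b) = a + b - c by ring,
    mul_comm, ordinaryHypergeometric_eq_tsum_mul, ordinaryHypergeometric_eq_tsum_mul,
    ordinaryHypergeometric_eq_tsum_mul, tsum_mul_pow_mul_tsum_mul_pow hsum hsum_binomial]
  exact tsum_congr fun n => by rw [sum_antidiagonal_ordinaryHypergeometricCoefficient_mul a b hc]

theorem hypF_eq_ordinaryHypergeometric (a b c x : ℝ) : hypF a b c x = ₂F₁ a b c x := by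
  rw [ordinaryHypergeometric_eq_tsum_mul]
  exact tsum_congr fun n => by ring

theorem stmt_7 (a b c : ℝ) (hc : ∀ n : ℕ, c ≠ -(n : ℝ))
    (x : ℝ) (hx : x ∈ Set.Ioo (0 : ℝ) 1) :
    hypF a b c x = (1 - x) ^ (c - a - b) * hypF (c - a) (c - b) c x := by
  rw [hypF_eq_ordinaryHypergeometric, hypF_eq_ordinaryHypergeometric]
  exact ordinaryHypergeometric_eq_one_sub_rpow_mul a b
    (fun n h => hc n (neg_eq_iff_eq_neg.mp h.symm)) (abs_lt.mpr ⟨by linarith [hx.1], hx.2⟩)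
end
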